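/- For every ν with 0 < ν < 1 there exists a unique μᵗ(ν) > −1 such that ω(k₊(ν); μᵗ(ν), ν) = 0, i.e., such that −2(1 + μᵗ + √(1+μᵗ)) + G(k₊(ν);ν) = 0; moreover ω(k; μᵗ(ν), ν) < 0 for every real k with |k| ≠ k₊(ν). (Thus u⁺ undergoes a Turing bifurcation with critical wave number k₊(ν) at μ = μᵗ(ν).) -/

import Mathlib

/-- F_u(u;μ) = μ + 4u − 3u². -/
noncomputable def Fu (u μ : ℝ) : ℝ := μ + 4 * u - 3 * u ^ 2

/-- u⁺(μ) = 1 + √(1+μ). -/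
noncomputable def uplus (μ : ℝ) : ℝ := 1 + Real.sqrt (1 + μ)

/-- G(k;ν) = −νk² + 2k⁴ − k⁶. -/
noncomputable def G (k ν : ℝ) : ℝ := -ν * k ^ 2 + 2 * k ^ 4 - k ^ 6

/-- Dispersion relation ω(k;μ,ν) = F_u(u⁺(μ);μ) + G(k;ν). -/
noncomputable def omega (k μ ν : ℝ) : ℝ := Fu (uplus μ) μ + G k ν

/-- k₊(ν) = √((4+√(16−12ν))/6). -/
noncomputable def kplus (ν : ℝ) : ℝ := Real.sqrt ((4 + Real.sqrt (16 - 12 * ν)) / 6)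

/-!
Writing `X = k²`, the map `X ↦ -νX + 2X² - X³` has a critical point at `X = k₊(ν)²`, where
`ν = 4X - 3X²`, and there `G(k;ν) - G(k₊;ν) = -(k² - k₊²)² (k² + 2k₊² - 2)`. For `ν < 1` one has
`k₊² > 1`, so `G(k;ν) < G(k₊;ν)` whenever `|k| ≠ k₊`, and `G(k₊;ν) = 2k₊⁴(k₊² - 1) > 0`. Since
`ω(k;μ,ν) - ω(k₊;μ,ν) = G(k;ν) - G(k₊;ν)`, the sign claim follows. With `a = √(1+μ)` the
bifurcation equation reads `2(a² + a) = G(k₊;ν)`, which has exactly one root `a > 0`.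
-/

open Real

lemma G_sub_G_of_critical {k K ν : ℝ} (hν : 4 * K ^ 2 - 3 * K ^ 4 = ν) :
    G k ν - G K ν = -((k ^ 2 - K ^ 2) ^ 2 * (k ^ 2 + 2 * K ^ 2 - 2)) := by
  rw [G, G, ← hν]
  ring

lemma G_lt_G_of_critical {k K ν : ℝ} (hν : 4 * K ^ 2 - 3 * K ^ 4 = ν) (hK : 1 < K ^ 2)
    (hk : k ^ 2 ≠ K ^ 2) : G k ν < G K ν := by
  have hsq : 0 < (k ^ 2 - K ^ 2) ^ 2 := sq_pos_of_ne_zero (sub_ne_zero.mpr hk)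
  have hlin : 0 < k ^ 2 + 2 * K ^ 2 - 2 := by nlinarith [sq_nonneg k]
  linarith [G_sub_G_of_critical (k := k) hν, mul_pos hsq hlin]

lemma G_eq_of_critical {K ν : ℝ} (hν : 4 * K ^ 2 - 3 * K ^ 4 = ν) :
    G K ν = 2 * K ^ 4 * (K ^ 2 - 1) := by
  rw [G, ← hν]
  ring

lemma omega_sub_omega (k K μ ν : ℝ) : omega k μ ν - omega K μ ν = G k ν - G K ν := by
  rw [omega, omega]
  ring

lemma kplus_sq (ν : ℝ) : kplus ν ^ 2 = (4 + √(16 - 12 * ν)) / 6 :=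
  sq_sqrt (by positivity)

lemma four_mul_kplus_sq_sub_three_mul_kplus_pow_four {ν : ℝ} (hν : ν ≤ 4 / 3) :
    4 * kplus ν ^ 2 - 3 * kplus ν ^ 4 = ν := by
  have hs : √(16 - 12 * ν) ^ 2 = 16 - 12 * ν := sq_sqrt (by linarith)
  rw [show kplus ν ^ 4 = (kplus ν ^ 2) ^ 2 by ring, kplus_sq ν]
  linear_combination (-1 / 12 : ℝ) * hs

lemma one_lt_kplus_sq {ν : ℝ} (hν : ν < 1) : 1 < kplus ν ^ 2 := by
  have hs : 2 < √(16 - 12 * ν) := lt_sqrt_of_sq_lt (by linarith)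
  rw [kplus_sq ν]
  linarith

lemma G_kplus_pos {ν : ℝ} (hν : ν < 1) : 0 < G (kplus ν) ν := by
  have hK := one_lt_kplus_sq hν
  rw [G_eq_of_critical (four_mul_kplus_sq_sub_three_mul_kplus_pow_four (by linarith))]
  have hK4 : 0 < kplus ν ^ 4 := by
    rw [show kplus ν ^ 4 = (kplus ν ^ 2) ^ 2 by ring]
    exact pow_pos (by linarith) 2
  exact mul_pos (mul_pos two_pos hK4) (sub_pos.2 hK)

lemma exists_pos_sq_add_self_eq {c : ℝ} (hc : 0 < c) : ∃ t : ℝ, 0 < t ∧ t ^ 2 + t = c := by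
  have hr : (√(1 + 4 * c)) ^ 2 = 1 + 4 * c := sq_sqrt (by linarith)
  have hr1 : 1 < √(1 + 4 * c) := lt_sqrt_of_sq_lt (by linarith)
  exact ⟨(√(1 + 4 * c) - 1) / 2, by linarith, by linear_combination (1 / 4 : ℝ) * hr⟩

lemma existsUnique_bifurcation_eq {c : ℝ} (hc : 0 < c) :
    ∃! μ : ℝ, -1 < μ ∧ -2 * (1 + μ + √(1 + μ)) + c = 0 := by
  obtain ⟨t, ht, htc⟩ := exists_pos_sq_add_self_eq (half_pos hc)
  refine ⟨t ^ 2 - 1, ⟨by nlinarith, ?_⟩, ?_⟩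
  · rw [add_sub_cancel, sqrt_sq ht.le]
    linarith
  · rintro μ ⟨hμ, hμc⟩
    set a := √(1 + μ)
    have ha : a ^ 2 = 1 + μ := sq_sqrt (by linarith)
    have hfactor : (a - t) * (a + t + 1) = 0 := by
      linear_combination ha - (1 / 2 : ℝ) * hμc - htc
    have hat : a = t := by
      rcases mul_eq_zero.mp hfactor with h | h
      · linarith
      · linarith [sqrt_nonneg (1 + μ)]
    rw [← hat, ha]
    ring

theorem turing_bifurcation_exists_unique_general (ν : ℝ) (h1 : ν < 1) :
    (∃! μ : ℝ, -1 < μ ∧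
        -2 * (1 + μ + Real.sqrt (1 + μ)) + G (kplus ν) ν = 0) ∧
    (∀ μ : ℝ, -1 < μ → omega (kplus ν) μ ν = 0 →
      ∀ k : ℝ, |k| ≠ kplus ν → omega k μ ν < 0) := by
  refine ⟨existsUnique_bifurcation_eq (G_kplus_pos h1), fun μ _ hω k hk => ?_⟩
  have hk_sq : k ^ 2 ≠ kplus ν ^ 2 := by
    have habs : |kplus ν| = kplus ν := abs_of_nonneg (sqrt_nonneg _)
    rwa [Ne, sq_eq_sq_iff_abs_eq_abs, habs]
  have hG := G_lt_G_of_critical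
    (four_mul_kplus_sq_sub_three_mul_kplus_pow_four (by linarith)) (one_lt_kplus_sq h1) hk_sq
  linarith [omega_sub_omega k (kplus ν) μ ν]

/-- for every 0 < ν < 1 there is a unique μᵗ(ν) > −1 with
ω(k₊(ν);μᵗ,ν) = 0, i.e. −2(1 + μᵗ + √(1+μᵗ)) + G(k₊(ν);ν) = 0; moreover for
this μᵗ one has ω(k;μᵗ,ν) < 0 for all k with |k| ≠ k₊(ν). -/
theorem turing_bifurcation_exists_unique (ν : ℝ) (h0 : 0 < ν) (h1 : ν < 1) :
    (∃! μ : ℝ, -1 < μ ∧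
        -2 * (1 + μ + Real.sqrt (1 + μ)) + G (kplus ν) ν = 0) ∧
    (∀ μ : ℝ, -1 < μ → omega (kplus ν) μ ν = 0 →
      ∀ k : ℝ, |k| ≠ kplus ν → omega k μ ν < 0) :=
  turing_bifurcation_exists_unique_general ν h1
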